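/- arXiv:2401.09147 — 3 statements merged into one kernel-verified Lean document; each statement's English description precedes it below -/
import Mathlib

section
/- Suppose w_δ : ℝ^n → ℝ satisfy the oscillation bound w_δ(x) − e^{−δ t̄} w_δ(x̄) ≤ (C_L/δ)(1 − e^{−2Sδ}) whenever t̄ ≤ 2S, together with the bounds −C/δ ≤ w_δ ≤ C/δ. Then |δ w_δ(x) − δ w_δ(x̄)| ≤ (C_L + C)(1 − e^{−2Sδ}) for all x, x̄ ∈ ℝ^n; in particular the oscillation of δ w_δ is O(δ) as δ → 0+. -/
/-! Write `w x - w x̄ = (w x - e^{-δt} w x̄) - (1 - e^{-δt}) w x̄`. The first term is controlled by the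
oscillation hypothesis, the second by `|w| ≤ C/δ` together with `1 - e^{-δt} ≤ 1 - e^{-2Sδ}` for
`t ≤ 2S`. Multiplying by `δ` and symmetrising in `x, x̄` gives the bound. -/

open Real

lemma sub_le_of_sub_mul_le {u v l m K M : ℝ} (hml : m ≤ l) (hl : l ≤ 1) (hv : |v| ≤ M)
    (h : u - l * v ≤ K) : u - v ≤ K + (1 - m) * M := by
  have hM : 0 ≤ M := (abs_nonneg v).trans hv
  have hdiscount : -((1 - l) * v) ≤ (1 - m) * M :=
    calc -((1 - l) * v) ≤ (1 - l) * |v| := by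
          rw [neg_mul_eq_mul_neg]; exact mul_le_mul_of_nonneg_left (neg_le_abs v) (by linarith)
      _ ≤ (1 - l) * M := mul_le_mul_of_nonneg_left hv (by linarith)
      _ ≤ (1 - m) * M := mul_le_mul_of_nonneg_right (by linarith) hM
  linarith

lemma exp_neg_mul_mem_Icc {S δ t : ℝ} (hδ : 0 ≤ δ) (ht : t ∈ Set.Icc 0 (2 * S)) :
    exp (-(δ * t)) ∈ Set.Icc (exp (-(2 * S * δ))) 1 := by
  refine ⟨exp_le_exp.mpr ?_, exp_le_one_iff.mpr ?_⟩
  · nlinarith [ht.2]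
  · nlinarith [ht.1]

lemma mul_sub_le_of_discounted_osc {α : Type*} {w : α → ℝ} {C CL S δ : ℝ} (hδ : 0 < δ)
    (hosc : ∀ x xb, ∃ t ∈ Set.Icc (0:ℝ) (2 * S),
      w x - exp (-(δ * t)) * w xb ≤ (CL / δ) * (1 - exp (-(2 * S * δ))))
    (hbd : ∀ z, |w z| ≤ C / δ) (x xb : α) :
    δ * w x - δ * w xb ≤ (CL + C) * (1 - exp (-(2 * S * δ))) := by
  obtain ⟨t, ht, hle⟩ := hosc x xb
  have hexp := exp_neg_mul_mem_Icc hδ.le ht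
  have hsub := sub_le_of_sub_mul_le hexp.1 hexp.2 (hbd xb) hle
  calc δ * w x - δ * w xb = δ * (w x - w xb) := by ring
    _ ≤ δ * (CL / δ * (1 - exp (-(2 * S * δ))) + (1 - exp (-(2 * S * δ))) * (C / δ)) :=
        mul_le_mul_of_nonneg_left hsub hδ.le
    _ = (CL + C) * (1 - exp (-(2 * S * δ))) := by field_simp

theorem oscillation_O_delta_general {n : ℕ} (w : (Fin n → ℝ) → ℝ)
    (C CL S δ : ℝ) (hδ : 0 < δ)
    (hosc : ∀ x xb : Fin n → ℝ, ∃ t ∈ Set.Icc (0:ℝ) (2 * S),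
      w x - Real.exp (-(δ * t)) * w xb ≤ (CL / δ) * (1 - Real.exp (-(2 * S * δ))))
    (hbd : ∀ z, |w z| ≤ C / δ) :
    ∀ x xb : Fin n → ℝ,
      |δ * w x - δ * w xb| ≤ (CL + C) * (1 - Real.exp (-(2 * S * δ))) := fun x xb =>
  abs_sub_le_iff.mpr ⟨mul_sub_le_of_discounted_osc hδ hosc hbd x xb,
    mul_sub_le_of_discounted_osc hδ hosc hbd xb x⟩

/-- From the discounted suboptimality oscillation bound and the bounds `|w_δ| ≤ C/δ`
one deduces `|δ w_δ(x) − δ w_δ(x̄)| ≤ (C_L + C)(1 − e^{−2Sδ})`, which is `O(δ)`. -/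
theorem oscillation_O_delta {n : ℕ} (w : (Fin n → ℝ) → ℝ)
    (C CL S δ : ℝ) (hC : 0 < C) (hCL : 0 < CL) (hS : 0 < S) (hδ : 0 < δ)
    (hosc : ∀ x xb : Fin n → ℝ, ∃ t ∈ Set.Icc (0:ℝ) (2 * S),
      w x - Real.exp (-(δ * t)) * w xb ≤ (CL / δ) * (1 - Real.exp (-(2 * S * δ))))
    (hbd : ∀ z, |w z| ≤ C / δ) :
    ∀ x xb : Fin n → ℝ,
      |δ * w x - δ * w xb| ≤ (CL + C) * (1 - Real.exp (-(2 * S * δ))) :=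
  oscillation_O_delta_general w C CL S δ hδ hosc hbd
end

section
/- Define λ₁ := sup{ λ : the equation λ + H(x, Du) = 0 has a bounded usc viscosity subsolution } and λ₂ := inf{ λ : it has a bounded lsc viscosity supersolution }. If H satisfies the comparison principle (for every δ > 0, any bounded usc subsolution u and bounded lsc supersolution v of δw + H(x, Dw) = 0 satisfy u ≤ v), then λ₁ ≤ λ₂. -/
open Topology

/-- A bounded real-valued function. -/
def IsBdd {α : Type*} (u : α → ℝ) : Prop := ∃ M, ∀ x, |u x| ≤ M

/-- Viscosity subsolution of `G(x, u(x), Du(x)) = 0` (test functions touching from above). -/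
def IsViscSubsolution {n : ℕ}
    (G : EuclideanSpace ℝ (Fin n) → ℝ → EuclideanSpace ℝ (Fin n) → ℝ)
    (u : EuclideanSpace ℝ (Fin n) → ℝ) : Prop :=
  ∀ φ : EuclideanSpace ℝ (Fin n) → ℝ, ContDiff ℝ 1 φ →
    ∀ x p, HasGradientAt φ p x →
      IsLocalMax (fun y => u y - φ y) x → G x (u x) p ≤ 0

/-- Viscosity supersolution of `G(x, u(x), Du(x)) = 0` (test functions touching from below). -/
def IsViscSupersolution {n : ℕ}
    (G : EuclideanSpace ℝ (Fin n) → ℝ → EuclideanSpace ℝ (Fin n) → ℝ)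
    (u : EuclideanSpace ℝ (Fin n) → ℝ) : Prop :=
  ∀ φ : EuclideanSpace ℝ (Fin n) → ℝ, ContDiff ℝ 1 φ →
    ∀ x p, HasGradientAt φ p x →
      IsLocalMin (fun y => u y - φ y) x → G x (u x) p ≥ 0

/-!
If `u` is a bounded subsolution at level `a` and `v` a bounded supersolution at level `b`, then
after normalising `u ≤ 0 ≤ v` by constants, `u + a/δ` and `v + b/δ` are a subsolution and a
supersolution of `δw + H(x, Dw) = 0`. Comparison gives `a - b ≤ δ (v x - u x)` for every
`δ > 0`, and `δ → 0` yields `a ≤ b`.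
-/

open Filter

theorem IsBdd.add_const {α : Type*} {u : α → ℝ} (hu : IsBdd u) (c : ℝ) :
    IsBdd fun x => u x + c := by
  obtain ⟨M, hM⟩ := hu
  exact ⟨M + |c|, fun x => (abs_add_le _ _).trans (add_le_add_left (hM x) _)⟩

theorem IsBdd.exists_le {α : Type*} {u : α → ℝ} (hu : IsBdd u) : ∃ M, ∀ x, u x ≤ M := by
  obtain ⟨M, hM⟩ := hu
  exact ⟨M, fun x => (abs_le.mp (hM x)).2⟩

theorem IsBdd.exists_ge {α : Type*} {u : α → ℝ} (hu : IsBdd u) : ∃ M, ∀ x, M ≤ u x := by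
  obtain ⟨M, hM⟩ := hu
  exact ⟨-M, fun x => (abs_le.mp (hM x)).1⟩

section Viscosity

variable {n : ℕ} {G G' : EuclideanSpace ℝ (Fin n) → ℝ → EuclideanSpace ℝ (Fin n) → ℝ}
  {u : EuclideanSpace ℝ (Fin n) → ℝ}

theorem IsViscSubsolution.mono (hu : IsViscSubsolution G u)
    (hG : ∀ x p, G' x (u x) p ≤ G x (u x) p) : IsViscSubsolution G' u :=
  fun φ hφ x p hp hmax => (hG x p).trans (hu φ hφ x p hp hmax)

theorem IsViscSupersolution.mono (hu : IsViscSupersolution G u)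
    (hG : ∀ x p, G x (u x) p ≤ G' x (u x) p) : IsViscSupersolution G' u :=
  fun φ hφ x p hp hmin => (hu φ hφ x p hp hmin).trans (hG x p)

theorem IsViscSubsolution.add_const (hu : IsViscSubsolution G u) (c : ℝ) :
    IsViscSubsolution (fun x r p => G x (r - c) p) fun x => u x + c := by
  intro φ hφ x p hp hmax
  have hmax' : IsLocalMax (fun y => u y - (φ y - c)) x := by
    simpa only [sub_sub_eq_add_sub] using hmax
  simpa using hu (fun y => φ y - c) (hφ.sub contDiff_const) x p (hp.sub_const c) hmax'

theorem IsViscSupersolution.add_const (hu : IsViscSupersolution G u) (c : ℝ) :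
    IsViscSupersolution (fun x r p => G x (r - c) p) fun x => u x + c := by
  intro φ hφ x p hp hmin
  have hmin' : IsLocalMin (fun y => u y - (φ y - c)) x := by
    simpa only [sub_sub_eq_add_sub] using hmin
  simpa using hu (fun y => φ y - c) (hφ.sub contDiff_const) x p (hp.sub_const c) hmin'

end Viscosity

theorem le_of_isViscSubsolution_of_isViscSupersolution {n : ℕ}
    {H : EuclideanSpace ℝ (Fin n) → EuclideanSpace ℝ (Fin n) → ℝ}
    (hcomp : ∀ δ > (0:ℝ), ∀ u v : EuclideanSpace ℝ (Fin n) → ℝ,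
      IsBdd u → UpperSemicontinuous u → IsBdd v → LowerSemicontinuous v →
      IsViscSubsolution (fun x r p => δ * r + H x p) u →
      IsViscSupersolution (fun x r p => δ * r + H x p) v →
      ∀ x, u x ≤ v x)
    {a b : ℝ} {u v : EuclideanSpace ℝ (Fin n) → ℝ}
    (hub : IsBdd u) (husc : UpperSemicontinuous u)
    (hu : IsViscSubsolution (fun x _ p => a + H x p) u)
    (hvb : IsBdd v) (hvsc : LowerSemicontinuous v)
    (hv : IsViscSupersolution (fun x _ p => b + H x p) v) :
    a ≤ b := by
  obtain ⟨M, hM⟩ := hub.exists_le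
  obtain ⟨N, hN⟩ := hvb.exists_ge
  set K := (v 0 - N) - (u 0 - M)
  have key : ∀ δ > (0:ℝ), a - b ≤ δ * K := by
    intro δ hδ
    have hu' : IsViscSubsolution (fun x r p => δ * r + H x p) fun x => u x + (a / δ - M) :=
      (hu.add_const _).mono fun x p => by
        have hshift : δ * (u x + (a / δ - M)) = δ * (u x - M) + a := by field_simp; ring
        have : δ * (u x - M) ≤ 0 := mul_nonpos_of_nonneg_of_nonpos hδ.le (sub_nonpos.2 (hM x))
        simp only [hshift]
        linarith
    have hv' : IsViscSupersolution (fun x r p => δ * r + H x p) fun x => v x + (b / δ - N) :=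
      (hv.add_const _).mono fun x p => by
        have hshift : δ * (v x + (b / δ - N)) = δ * (v x - N) + b := by field_simp; ring
        have : 0 ≤ δ * (v x - N) := mul_nonneg hδ.le (sub_nonneg.2 (hN x))
        simp only [hshift]
        linarith
    have hcmp := hcomp δ hδ _ _ (hub.add_const _) (husc.add continuous_const.upperSemicontinuous)
      (hvb.add_const _) (hvsc.add continuous_const.lowerSemicontinuous) hu' hv' 0
    calc a - b = δ * (a / δ - b / δ) := by field_simp
      _ ≤ δ * K := by gcongr; linarith
  have hlim : Tendsto (fun δ => δ * K) (𝓝[>] 0) (𝓝 0) :=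
    ((continuous_mul_const K).tendsto' 0 0 (zero_mul K)).mono_left nhdsWithin_le_nhds
  exact sub_nonpos.1 (ge_of_tendsto hlim (eventually_mem_nhdsWithin.mono key))

theorem lambda1_le_lambda2_general {n : ℕ}
    (H : EuclideanSpace ℝ (Fin n) → EuclideanSpace ℝ (Fin n) → ℝ)
    (hcomp : ∀ δ > (0:ℝ), ∀ u v : EuclideanSpace ℝ (Fin n) → ℝ,
      IsBdd u → UpperSemicontinuous u → IsBdd v → LowerSemicontinuous v →
      IsViscSubsolution (fun x r p => δ * r + H x p) u →
      IsViscSupersolution (fun x r p => δ * r + H x p) v →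
      ∀ x, u x ≤ v x)
    (hne₁ : {l : ℝ | ∃ u, IsBdd u ∧ UpperSemicontinuous u ∧
      IsViscSubsolution (fun x _ p => l + H x p) u}.Nonempty)
    (hne₂ : {l : ℝ | ∃ v, IsBdd v ∧ LowerSemicontinuous v ∧
      IsViscSupersolution (fun x _ p => l + H x p) v}.Nonempty) :
    sSup {l : ℝ | ∃ u, IsBdd u ∧ UpperSemicontinuous u ∧
        IsViscSubsolution (fun x _ p => l + H x p) u} ≤
      sInf {l : ℝ | ∃ v, IsBdd v ∧ LowerSemicontinuous v ∧
        IsViscSupersolution (fun x _ p => l + H x p) v} :=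
  csSup_le hne₁ fun _ ⟨_, hub, husc, hu⟩ => le_csInf hne₂ fun _ ⟨_, hvb, hvsc, hv⟩ =>
    le_of_isViscSubsolution_of_isViscSupersolution hcomp hub husc hu hvb hvsc hv

/-- If `H` satisfies the comparison principle for the discounted equations
`δw + H(x, Dw) = 0`, then
`λ₁ = sup{λ : ∃ bounded usc subsolution of λ + H(x,Du) = 0}` is at most
`λ₂ = inf{λ : ∃ bounded lsc supersolution of λ + H(x,Du) = 0}`. -/
theorem lambda1_le_lambda2 {n : ℕ}
    (H : EuclideanSpace ℝ (Fin n) → EuclideanSpace ℝ (Fin n) → ℝ)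
    (hH : Continuous fun q : EuclideanSpace ℝ (Fin n) × EuclideanSpace ℝ (Fin n) => H q.1 q.2)
    (hcomp : ∀ δ > (0:ℝ), ∀ u v : EuclideanSpace ℝ (Fin n) → ℝ,
      IsBdd u → UpperSemicontinuous u → IsBdd v → LowerSemicontinuous v →
      IsViscSubsolution (fun x r p => δ * r + H x p) u →
      IsViscSupersolution (fun x r p => δ * r + H x p) v →
      ∀ x, u x ≤ v x)
    (hne₁ : {l : ℝ | ∃ u, IsBdd u ∧ UpperSemicontinuous u ∧
      IsViscSubsolution (fun x _ p => l + H x p) u}.Nonempty)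
    (hne₂ : {l : ℝ | ∃ v, IsBdd v ∧ LowerSemicontinuous v ∧
      IsViscSupersolution (fun x _ p => l + H x p) v}.Nonempty) :
    sSup {l : ℝ | ∃ u, IsBdd u ∧ UpperSemicontinuous u ∧
        IsViscSubsolution (fun x _ p => l + H x p) u} ≤
      sInf {l : ℝ | ∃ v, IsBdd v ∧ LowerSemicontinuous v ∧
        IsViscSupersolution (fun x _ p => l + H x p) v} :=
  lambda1_le_lambda2_general H hcomp hne₁ hne₂
end

section
/- Suppose v : ℝ^n → ℝ is a bounded usc viscosity subsolution of μ + H(x, Dv) ≤ 0, w solves the Cauchy problem ∂_t w + H(x, D_x w) = 0 with initial data w₀ ≥ v, and the parabolic comparison principle holds. Then liminf_{t→∞} min_x w(x,t)/t ≥ μ. Symmetrically, if u is a bounded lsc supersolution at level ν and w₀ ≤ u + C, then limsup_{t→∞} max_x w(x,t)/t ≤ ν. Hence if the critical value λ̄ satisfies λ₁ = λ₂ = λ̄, then w(x,t)/t → λ̄ uniformly in x. -/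
open Topology

/-- `G x r a p` stands for `G(x, w, ∂ₜw, D_x w)`, on `ℝⁿ × (0,∞)`. -/
def IsParabSubsolution {n : ℕ}
    (G : EuclideanSpace ℝ (Fin n) → ℝ → ℝ → EuclideanSpace ℝ (Fin n) → ℝ)
    (w : EuclideanSpace ℝ (Fin n) → ℝ → ℝ) : Prop :=
  ∀ φ : EuclideanSpace ℝ (Fin n) → ℝ → ℝ,
    ContDiff ℝ 1 (fun q : EuclideanSpace ℝ (Fin n) × ℝ => φ q.1 q.2) →
    ∀ x t p a, 0 < t →
      HasGradientAt (fun y => φ y t) p x →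
      HasDerivAt (fun s => φ x s) a t →
      IsLocalMaxOn (fun q : EuclideanSpace ℝ (Fin n) × ℝ => w q.1 q.2 - φ q.1 q.2)
        {q : EuclideanSpace ℝ (Fin n) × ℝ | 0 < q.2} (x, t) →
      G x (w x t) a p ≤ 0

def IsParabSupersolution {n : ℕ}
    (G : EuclideanSpace ℝ (Fin n) → ℝ → ℝ → EuclideanSpace ℝ (Fin n) → ℝ)
    (w : EuclideanSpace ℝ (Fin n) → ℝ → ℝ) : Prop :=
  ∀ φ : EuclideanSpace ℝ (Fin n) → ℝ → ℝ,
    ContDiff ℝ 1 (fun q : EuclideanSpace ℝ (Fin n) × ℝ => φ q.1 q.2) →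
    ∀ x t p a, 0 < t →
      HasGradientAt (fun y => φ y t) p x →
      HasDerivAt (fun s => φ x s) a t →
      IsLocalMinOn (fun q : EuclideanSpace ℝ (Fin n) × ℝ => w q.1 q.2 - φ q.1 q.2)
        {q : EuclideanSpace ℝ (Fin n) × ℝ | 0 < q.2} (x, t) →
      G x (w x t) a p ≥ 0

/-!
A stationary subsolution `v` at level `μ` gives the subsolution `v x + μ t` of the Cauchy
problem: a test function touching it from above at `(x, t)` has time derivative `μ` and
touches `v` from above in space. Comparison with `w` yields `v x + μ t ≤ w x t`, so
`w x t / t ≥ μ - sup |v| / t`. Symmetrically `u x + ν t + C` is a supersolution lying above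
`w` at time `0`, which gives `w x t / t ≤ ν + (sup |u| + C) / t`.
-/

section StationaryToEvolutive

variable {n : ℕ} {H : EuclideanSpace ℝ (Fin n) → EuclideanSpace ℝ (Fin n) → ℝ}

theorem IsViscSubsolution.isParabSubsolution_add_mul {μ : ℝ} {v : EuclideanSpace ℝ (Fin n) → ℝ}
    (hv : IsViscSubsolution (fun x _ p => μ + H x p) v) :
    IsParabSubsolution (fun x _ a p => a + H x p) (fun x t => v x + μ * t) := by
  intro φ hφ x t p a ht hgrad hderiv hmax
  have hmax' : IsLocalMax (fun q : EuclideanSpace ℝ (Fin n) × ℝ => v q.1 + μ * q.2 - φ q.1 q.2)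
      (x, t) :=
    hmax.isLocalMax ((isOpen_lt continuous_const continuous_snd).mem_nhds ht)
  have hspace : IsLocalMax (fun y => v y - φ y t) x :=
    (hmax'.comp_continuous (g := fun y => (y, t)) (by fun_prop)).mono fun y hy => by
      simp only [Function.comp_apply] at hy
      linarith
  have htime : μ - a = 0 :=
    (hmax'.comp_continuous (g := fun s => (x, s)) (by fun_prop)).hasDerivAt_eq_zero
      ((((hasDerivAt_id t).const_mul μ).const_add (v x)).sub hderiv |>.congr_deriv (by ring))
  have := hv _ (hφ.comp (contDiff_id.prodMk contDiff_const)) x p hgrad hspace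
  change μ + H x p ≤ 0 at this
  change a + H x p ≤ 0
  linarith

theorem IsViscSupersolution.isParabSupersolution_add_mul {ν : ℝ} {u : EuclideanSpace ℝ (Fin n) → ℝ}
    (hu : IsViscSupersolution (fun x _ p => ν + H x p) u) :
    IsParabSupersolution (fun x _ a p => a + H x p) (fun x t => u x + ν * t) := by
  intro φ hφ x t p a ht hgrad hderiv hmin
  have hmin' : IsLocalMin (fun q : EuclideanSpace ℝ (Fin n) × ℝ => u q.1 + ν * q.2 - φ q.1 q.2)
      (x, t) :=
    hmin.isLocalMin ((isOpen_lt continuous_const continuous_snd).mem_nhds ht)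
  have hspace : IsLocalMin (fun y => u y - φ y t) x :=
    (hmin'.comp_continuous (g := fun y => (y, t)) (by fun_prop)).mono fun y hy => by
      simp only [Function.comp_apply] at hy
      linarith
  have htime : ν - a = 0 :=
    (hmin'.comp_continuous (g := fun s => (x, s)) (by fun_prop)).hasDerivAt_eq_zero
      ((((hasDerivAt_id t).const_mul ν).const_add (u x)).sub hderiv |>.congr_deriv (by ring))
  have := hu _ (hφ.comp (contDiff_id.prodMk contDiff_const)) x p hgrad hspace
  change ν + H x p ≥ 0 at this
  change a + H x p ≥ 0
  linarith

end StationaryToEvolutive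

def BoundedOnStrips {α : Type*} (w : α → ℝ → ℝ) : Prop :=
  ∀ T > (0:ℝ), ∃ M, ∀ x, ∀ t ∈ Set.Icc (0:ℝ) T, |w x t| ≤ M

theorem IsBdd.boundedOnStrips_add_mul {α : Type*} {v : α → ℝ} (hv : IsBdd v) (μ : ℝ) :
    BoundedOnStrips fun x t => v x + μ * t := by
  obtain ⟨M, hM⟩ := hv
  refine fun T _ => ⟨M + |μ| * T, fun x t ht => ?_⟩
  have ht' : |t| ≤ T := (abs_of_nonneg ht.1).symm ▸ ht.2
  calc |v x + μ * t| ≤ |v x| + |μ| * |t| := abs_mul μ t ▸ abs_add_le _ _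
    _ ≤ M + |μ| * T := by gcongr; exact hM x

theorem BoundedOnStrips.exists_common_bound {α : Type*} {u v : α → ℝ → ℝ}
    (hu : BoundedOnStrips u) (hv : BoundedOnStrips v) :
    ∀ T > (0:ℝ), ∃ M, ∀ x, ∀ t ∈ Set.Icc (0:ℝ) T, |u x t| ≤ M ∧ |v x t| ≤ M := by
  intro T hT
  obtain ⟨Mu, hMu⟩ := hu T hT
  obtain ⟨Mv, hMv⟩ := hv T hT
  exact ⟨max Mu Mv, fun x t ht =>
    ⟨le_max_of_le_left (hMu x t ht), le_max_of_le_right (hMv x t ht)⟩⟩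

theorem exists_forall_sub_le_div {α : Type*} {f : α → ℝ → ℝ} {μ K : ℝ}
    (hf : ∀ x t, 0 ≤ t → μ * t - K ≤ f x t) {ε : ℝ} (hε : 0 < ε) :
    ∃ T, ∀ t ≥ T, ∀ x, μ - ε ≤ f x t / t := by
  refine ⟨max 1 (K / ε), fun t ht x => ?_⟩
  have ht₀ : 0 < t := one_pos.trans_le (le_of_max_le_left ht)
  have hK : K ≤ ε * t := (div_le_iff₀' hε).1 (le_of_max_le_right ht)
  rw [le_div_iff₀ ht₀]
  linarith [hf x t ht₀.le]

theorem exists_forall_div_le_add {α : Type*} {f : α → ℝ → ℝ} {ν K : ℝ}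
    (hf : ∀ x t, 0 ≤ t → f x t ≤ ν * t + K) {ε : ℝ} (hε : 0 < ε) :
    ∃ T, ∀ t ≥ T, ∀ x, f x t / t ≤ ν + ε := by
  obtain ⟨T, hT⟩ := exists_forall_sub_le_div (f := fun x t => -f x t) (μ := -ν) (K := K)
    (fun x t ht => by linarith [hf x t ht]) hε
  exact ⟨T, fun t ht x => by linarith [neg_div t (f x t) ▸ hT t ht x]⟩

section Comparison

variable {n : ℕ} {H : EuclideanSpace ℝ (Fin n) → EuclideanSpace ℝ (Fin n) → ℝ}

def ParabComparisonPrinciple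
    (H : EuclideanSpace ℝ (Fin n) → EuclideanSpace ℝ (Fin n) → ℝ) : Prop :=
  ∀ u₁ v₁ : EuclideanSpace ℝ (Fin n) → ℝ → ℝ,
    UpperSemicontinuous (fun q : EuclideanSpace ℝ (Fin n) × ℝ => u₁ q.1 q.2) →
    LowerSemicontinuous (fun q : EuclideanSpace ℝ (Fin n) × ℝ => v₁ q.1 q.2) →
    (∀ T > (0:ℝ), ∃ M, ∀ x, ∀ t ∈ Set.Icc (0:ℝ) T, |u₁ x t| ≤ M ∧ |v₁ x t| ≤ M) →
    IsParabSubsolution (fun x _ a p => a + H x p) u₁ →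
    IsParabSupersolution (fun x _ a p => a + H x p) v₁ →
    ∀ M : ℝ, (∀ y, u₁ y 0 - v₁ y 0 ≤ M) → ∀ x t, 0 ≤ t → u₁ x t - v₁ x t ≤ M

variable {w : EuclideanSpace ℝ (Fin n) → ℝ → ℝ}

theorem ParabComparisonPrinciple.add_mul_le_of_isViscSubsolution
    (hcomp : ParabComparisonPrinciple H)
    (hw_lsc : LowerSemicontinuous fun q : EuclideanSpace ℝ (Fin n) × ℝ => w q.1 q.2)
    (hw_bdd : BoundedOnStrips w) (hw_sup : IsParabSupersolution (fun x _ a p => a + H x p) w)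
    {μ : ℝ} {v : EuclideanSpace ℝ (Fin n) → ℝ} (hv_bdd : IsBdd v) (hv_usc : UpperSemicontinuous v)
    (hv_sub : IsViscSubsolution (fun x _ p => μ + H x p) v) (hv_le : ∀ x, v x ≤ w x 0) :
    ∀ x t, 0 ≤ t → v x + μ * t ≤ w x t := by
  intro x t ht
  have := hcomp (fun x t => v x + μ * t) w
    ((hv_usc.comp continuous_fst).add (continuous_const.mul continuous_snd).upperSemicontinuous)
    hw_lsc ((hv_bdd.boundedOnStrips_add_mul μ).exists_common_bound hw_bdd)
    hv_sub.isParabSubsolution_add_mul hw_sup 0 (fun y => by simpa using hv_le y) x t ht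
  linarith

theorem ParabComparisonPrinciple.le_add_mul_add_of_isViscSupersolution
    (hcomp : ParabComparisonPrinciple H)
    (hw_usc : UpperSemicontinuous fun q : EuclideanSpace ℝ (Fin n) × ℝ => w q.1 q.2)
    (hw_bdd : BoundedOnStrips w) (hw_sub : IsParabSubsolution (fun x _ a p => a + H x p) w)
    {ν C : ℝ} {u : EuclideanSpace ℝ (Fin n) → ℝ} (hu_bdd : IsBdd u) (hu_lsc : LowerSemicontinuous u)
    (hu_sup : IsViscSupersolution (fun x _ p => ν + H x p) u) (hu_ge : ∀ x, w x 0 ≤ u x + C) :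
    ∀ x t, 0 ≤ t → w x t ≤ u x + ν * t + C := by
  intro x t ht
  have := hcomp w (fun x t => u x + ν * t) hw_usc
    ((hu_lsc.comp continuous_fst).add (continuous_const.mul continuous_snd).lowerSemicontinuous)
    (hw_bdd.exists_common_bound (hu_bdd.boundedOnStrips_add_mul ν))
    hw_sub hu_sup.isParabSupersolution_add_mul C (fun y => by linarith [hu_ge y]) x t ht
  linarith

end Comparison

theorem long_time_ergodic_limit_general {n : ℕ}
    (H : EuclideanSpace ℝ (Fin n) → EuclideanSpace ℝ (Fin n) → ℝ)
    (w : EuclideanSpace ℝ (Fin n) → ℝ → ℝ) (w₀ : EuclideanSpace ℝ (Fin n) → ℝ)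
    (hw_cont : Continuous fun q : EuclideanSpace ℝ (Fin n) × ℝ => w q.1 q.2)
    (hw_strip : ∀ T > (0:ℝ), ∃ M, ∀ x, ∀ t ∈ Set.Icc (0:ℝ) T, |w x t| ≤ M)
    (hw_sub : IsParabSubsolution (fun x _ a p => a + H x p) w)
    (hw_sup : IsParabSupersolution (fun x _ a p => a + H x p) w)
    (hw0 : ∀ x, w x 0 = w₀ x)
    -- the parabolic comparison principle
    (hcomp : ∀ u₁ v₁ : EuclideanSpace ℝ (Fin n) → ℝ → ℝ,
      UpperSemicontinuous (fun q : EuclideanSpace ℝ (Fin n) × ℝ => u₁ q.1 q.2) →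
      LowerSemicontinuous (fun q : EuclideanSpace ℝ (Fin n) × ℝ => v₁ q.1 q.2) →
      (∀ T > (0:ℝ), ∃ M, ∀ x, ∀ t ∈ Set.Icc (0:ℝ) T, |u₁ x t| ≤ M ∧ |v₁ x t| ≤ M) →
      IsParabSubsolution (fun x _ a p => a + H x p) u₁ →
      IsParabSupersolution (fun x _ a p => a + H x p) v₁ →
      ∀ M : ℝ, (∀ y, u₁ y 0 - v₁ y 0 ≤ M) → ∀ x t, 0 ≤ t → u₁ x t - v₁ x t ≤ M)
    (μ ν C : ℝ)
    (v : EuclideanSpace ℝ (Fin n) → ℝ)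
    (hv_bdd : IsBdd v) (hv_usc : UpperSemicontinuous v)
    (hv_sub : IsViscSubsolution (fun x _ p => μ + H x p) v)
    (hv_le : ∀ x, v x ≤ w₀ x)
    (u : EuclideanSpace ℝ (Fin n) → ℝ)
    (hu_bdd : IsBdd u) (hu_lsc : LowerSemicontinuous u)
    (hu_sup : IsViscSupersolution (fun x _ p => ν + H x p) u)
    (hu_ge : ∀ x, w₀ x ≤ u x + C) :
    (∀ ε > (0:ℝ), ∃ T, ∀ t ≥ T, ∀ x, μ - ε ≤ w x t / t) ∧
    (∀ ε > (0:ℝ), ∃ T, ∀ t ≥ T, ∀ x, w x t / t ≤ ν + ε) ∧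
    (μ = ν → ∀ ε > (0:ℝ), ∃ T, ∀ t ≥ T, ∀ x, |w x t / t - μ| ≤ ε) := by
  have hlow := ParabComparisonPrinciple.add_mul_le_of_isViscSubsolution hcomp
    hw_cont.lowerSemicontinuous hw_strip hw_sup hv_bdd hv_usc hv_sub fun x => hw0 x ▸ hv_le x
  have hupp := ParabComparisonPrinciple.le_add_mul_add_of_isViscSupersolution hcomp
    hw_cont.upperSemicontinuous hw_strip hw_sub hu_bdd hu_lsc hu_sup fun x => hw0 x ▸ hu_ge x
  obtain ⟨Mv, hMv⟩ := hv_bdd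
  obtain ⟨Mu, hMu⟩ := hu_bdd
  have hlower : ∀ ε > (0:ℝ), ∃ T, ∀ t ≥ T, ∀ x, μ - ε ≤ w x t / t := fun ε hε =>
    exists_forall_sub_le_div (K := Mv)
      (fun x t ht => by linarith [hlow x t ht, neg_le_of_abs_le (hMv x)]) hε
  have hupper : ∀ ε > (0:ℝ), ∃ T, ∀ t ≥ T, ∀ x, w x t / t ≤ ν + ε := fun ε hε =>
    exists_forall_div_le_add (K := Mu + C)
      (fun x t ht => by linarith [hupp x t ht, le_of_abs_le (hMu x)]) hε
  refine ⟨hlower, hupper, ?_⟩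
  rintro rfl ε hε
  obtain ⟨T₁, hT₁⟩ := hlower ε hε
  obtain ⟨T₂, hT₂⟩ := hupper ε hε
  exact ⟨max T₁ T₂, fun t ht x => abs_le.2
    ⟨by linarith [hT₁ t (le_of_max_le_left ht) x], by linarith [hT₂ t (le_of_max_le_right ht) x]⟩⟩

/-- Long-time ergodic limit: a bounded usc subsolution at level `μ` below `w₀` forces
`liminf min_x w(x,t)/t ≥ μ`; a bounded lsc supersolution at level `ν` with `w₀ ≤ u + C`
forces `limsup max_x w(x,t)/t ≤ ν`; hence if `μ = ν = λ̄` then `w(x,t)/t → λ̄`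
uniformly in `x`. -/
theorem long_time_ergodic_limit {n : ℕ}
    (H : EuclideanSpace ℝ (Fin n) → EuclideanSpace ℝ (Fin n) → ℝ)
    (hH : Continuous fun q : EuclideanSpace ℝ (Fin n) × EuclideanSpace ℝ (Fin n) => H q.1 q.2)
    (w : EuclideanSpace ℝ (Fin n) → ℝ → ℝ) (w₀ : EuclideanSpace ℝ (Fin n) → ℝ)
    (hw_cont : Continuous fun q : EuclideanSpace ℝ (Fin n) × ℝ => w q.1 q.2)
    (hw_strip : ∀ T > (0:ℝ), ∃ M, ∀ x, ∀ t ∈ Set.Icc (0:ℝ) T, |w x t| ≤ M)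
    (hw_sub : IsParabSubsolution (fun x _ a p => a + H x p) w)
    (hw_sup : IsParabSupersolution (fun x _ a p => a + H x p) w)
    (hw0 : ∀ x, w x 0 = w₀ x)
    -- the parabolic comparison principle
    (hcomp : ∀ u₁ v₁ : EuclideanSpace ℝ (Fin n) → ℝ → ℝ,
      UpperSemicontinuous (fun q : EuclideanSpace ℝ (Fin n) × ℝ => u₁ q.1 q.2) →
      LowerSemicontinuous (fun q : EuclideanSpace ℝ (Fin n) × ℝ => v₁ q.1 q.2) →
      (∀ T > (0:ℝ), ∃ M, ∀ x, ∀ t ∈ Set.Icc (0:ℝ) T, |u₁ x t| ≤ M ∧ |v₁ x t| ≤ M) →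
      IsParabSubsolution (fun x _ a p => a + H x p) u₁ →
      IsParabSupersolution (fun x _ a p => a + H x p) v₁ →
      ∀ M : ℝ, (∀ y, u₁ y 0 - v₁ y 0 ≤ M) → ∀ x t, 0 ≤ t → u₁ x t - v₁ x t ≤ M)
    (μ ν C : ℝ)
    (v : EuclideanSpace ℝ (Fin n) → ℝ)
    (hv_bdd : IsBdd v) (hv_usc : UpperSemicontinuous v)
    (hv_sub : IsViscSubsolution (fun x _ p => μ + H x p) v)
    (hv_le : ∀ x, v x ≤ w₀ x)
    (u : EuclideanSpace ℝ (Fin n) → ℝ)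
    (hu_bdd : IsBdd u) (hu_lsc : LowerSemicontinuous u)
    (hu_sup : IsViscSupersolution (fun x _ p => ν + H x p) u)
    (hu_ge : ∀ x, w₀ x ≤ u x + C) :
    (∀ ε > (0:ℝ), ∃ T, ∀ t ≥ T, ∀ x, μ - ε ≤ w x t / t) ∧
    (∀ ε > (0:ℝ), ∃ T, ∀ t ≥ T, ∀ x, w x t / t ≤ ν + ε) ∧
    (μ = ν → ∀ ε > (0:ℝ), ∃ T, ∀ t ≥ T, ∀ x, |w x t / t - μ| ≤ ε) :=
  long_time_ergodic_limit_general H w w₀ hw_cont hw_strip hw_sub hw_sup hw0 hcomp μ ν C v hv_bdd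
    hv_usc hv_sub hv_le u hu_bdd hu_lsc hu_sup hu_ge
end
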